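/- Let d ≥ 2, let X^1,…,X^d be measurable spaces, and let k^j : X^j × X^j → ℝ be jointly measurable with 0 ≤ k^j ≤ K^j. Let P be a probability measure on X^1 × ⋯ × X^d with marginals P_1,…,P_d, let H be a real Hilbert space, and let Φ : X^1 × ⋯ × X^d → H be strongly measurable with ⟨Φ(x), Φ(y)⟩ = Π_{j=1}^d k^j(x^j, y^j) for all x, y. Then Φ is Bochner integrable with respect to both P and the product measure P_1 ⊗ ⋯ ⊗ P_d, and ‖ ∫ Φ dP − ∫ Φ d(P_1 ⊗ ⋯ ⊗ P_d) ‖^2 = dHSIC_k(P)^2; in particular dHSIC_k(P)^2 ≥ 0. -/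

import Mathlib

open MeasureTheory Finset

noncomputable section

/-- Squared population dHSIC of a probability measure `P` on the product space,
corresponding to kernels `k j` (with `P.map (fun x => x j)` its `j`-th marginal). -/
def dHSICsqPop {d : ℕ} {X : Fin d → Type*} [∀ j, MeasurableSpace (X j)]
    (k : ∀ j, X j → X j → ℝ) (P : Measure (∀ j, X j)) : ℝ :=
  (∫ x, ∫ y, ∏ j, k j (x j) (y j) ∂P ∂P)
    + (∏ j, (∫ u, (∫ v, k j u v ∂(P.map (fun x => x j))) ∂(P.map (fun x => x j))))
    - 2 * ∫ x, ∏ j, (∫ v, k j (x j) v ∂(P.map (fun x => x j))) ∂P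

/-!
The feature map `Φ` turns `∏ j, k j` into an inner product, so every term of `dHSICsqPop` is an
inner product of the mean embeddings `∫ Φ dP` and `∫ Φ dQ`, where `Q` is the product of the
marginals; on `Q` the integrand factorizes and Fubini produces the product of marginal integrals.
Expanding `‖∫ Φ dP - ∫ Φ dQ‖ ^ 2` then gives exactly the three terms.
-/

section MeanEmbedding

variable {α H : Type*} [MeasurableSpace α] [NormedAddCommGroup H] [InnerProductSpace ℝ H]
  [CompleteSpace H] {Φ : α → H} {κ : α → α → ℝ} {ν₁ ν₂ : Measure α}

theorem inner_integral_eq_integral_integral (hΦ : ∀ x y, inner ℝ (Φ x) (Φ y) = κ x y)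
    (h₁ : Integrable Φ ν₁) (h₂ : Integrable Φ ν₂) :
    inner ℝ (∫ x, Φ x ∂ν₁) (∫ y, Φ y ∂ν₂) = ∫ x, ∫ y, κ x y ∂ν₂ ∂ν₁ := by
  rw [real_inner_comm, ← integral_inner h₁]
  refine integral_congr_ae (ae_of_all _ fun x => ?_)
  dsimp only
  rw [real_inner_comm, ← integral_inner h₂]
  exact integral_congr_ae (ae_of_all _ fun y => hΦ x y)

theorem norm_integral_sub_integral_sq_eq (hΦ : ∀ x y, inner ℝ (Φ x) (Φ y) = κ x y)
    (h₁ : Integrable Φ ν₁) (h₂ : Integrable Φ ν₂) :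
    ‖∫ x, Φ x ∂ν₁ - ∫ x, Φ x ∂ν₂‖ ^ 2 =
      (∫ x, ∫ y, κ x y ∂ν₁ ∂ν₁) + (∫ x, ∫ y, κ x y ∂ν₂ ∂ν₂) - 2 * ∫ x, ∫ y, κ x y ∂ν₂ ∂ν₁ := by
  rw [norm_sub_sq_real, ← real_inner_self_eq_norm_sq, ← real_inner_self_eq_norm_sq,
    inner_integral_eq_integral_integral hΦ h₁ h₁, inner_integral_eq_integral_integral hΦ h₂ h₂,
    inner_integral_eq_integral_integral hΦ h₁ h₂]
  ring

end MeanEmbedding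

theorem norm_le_sqrt_prod_of_inner_self_eq_prod {ι H : Type*} [Fintype ι] [NormedAddCommGroup H]
    [InnerProductSpace ℝ H] {v : H} {c C : ι → ℝ} (hv : inner ℝ v v = ∏ i, c i)
    (hc : ∀ i, 0 ≤ c i) (hcC : ∀ i, c i ≤ C i) : ‖v‖ ≤ √(∏ i, C i) := by
  rw [← Real.sqrt_sq (norm_nonneg v), ← real_inner_self_eq_norm_sq, hv]
  exact Real.sqrt_le_sqrt (prod_le_prod (fun i _ => hc i) fun i _ => hcC i)

theorem dHSICsqPop_eq_norm_sq_mean_embedding_general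
    {d : ℕ}
    (X : Fin d → Type*) [∀ j, MeasurableSpace (X j)]
    (k : ∀ j, X j → X j → ℝ) (K : Fin d → ℝ)
    (hbdd : ∀ j, ∀ x y : X j, 0 ≤ k j x y ∧ k j x y ≤ K j)
    (P : Measure (∀ j, X j)) [IsProbabilityMeasure P]
    (H : Type*) [NormedAddCommGroup H] [InnerProductSpace ℝ H] [CompleteSpace H]
    (Φ : (∀ j, X j) → H) (hΦm : StronglyMeasurable Φ)
    (hΦ : ∀ x y : ∀ j, X j, (inner ℝ (Φ x) (Φ y) : ℝ) = ∏ j, k j (x j) (y j)) :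
    Integrable Φ P ∧
    Integrable Φ (Measure.pi (fun j => P.map (fun x => x j))) ∧
    ‖(∫ x, Φ x ∂P) - ∫ x, Φ x ∂(Measure.pi (fun j => P.map (fun x => x j)))‖ ^ 2
        = dHSICsqPop k P ∧
    0 ≤ dHSICsqPop k P := by
  set μ : ∀ j, Measure (X j) := fun j => P.map (fun x => x j)
  have : ∀ j, IsProbabilityMeasure (μ j) := fun j =>
    Measure.isProbabilityMeasure_map (measurable_pi_apply j).aemeasurable
  have hint : ∀ (ν : Measure (∀ j, X j)) [IsFiniteMeasure ν], Integrable Φ ν := fun ν _ =>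
    .of_bound hΦm.aestronglyMeasurable _ <| ae_of_all _ fun x =>
      norm_le_sqrt_prod_of_inner_self_eq_prod (hΦ x x) (fun j => (hbdd j _ _).1)
        fun j => (hbdd j _ _).2
  have hfactor : ∀ x : ∀ j, X j,
      ∫ y, ∏ j, k j (x j) (y j) ∂Measure.pi μ = ∏ j, ∫ v, k j (x j) v ∂μ j := fun x =>
    integral_fintype_prod_eq_prod fun j => k j (x j)
  have hdist : ‖(∫ x, Φ x ∂P) - ∫ x, Φ x ∂Measure.pi μ‖ ^ 2 = dHSICsqPop k P := by
    rw [norm_integral_sub_integral_sq_eq hΦ (hint P) (hint _), dHSICsqPop]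
    simp_rw [hfactor]
    rw [integral_fintype_prod_eq_prod fun j u => ∫ v, k j u v ∂μ j]
  exact ⟨hint P, hint _, hdist, hdist ▸ sq_nonneg _⟩

/-- the squared population dHSIC is the squared distance between
the mean embedding of `P` and that of the product of its marginals. -/
theorem dHSICsqPop_eq_norm_sq_mean_embedding
    {d : ℕ} (hd : 2 ≤ d)
    (X : Fin d → Type*) [∀ j, MeasurableSpace (X j)]
    (k : ∀ j, X j → X j → ℝ) (K : Fin d → ℝ)
    (hkm : ∀ j, Measurable (Function.uncurry (k j)))
    (hbdd : ∀ j, ∀ x y : X j, 0 ≤ k j x y ∧ k j x y ≤ K j)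
    (P : Measure (∀ j, X j)) [IsProbabilityMeasure P]
    (H : Type*) [NormedAddCommGroup H] [InnerProductSpace ℝ H] [CompleteSpace H]
    (Φ : (∀ j, X j) → H) (hΦm : StronglyMeasurable Φ)
    (hΦ : ∀ x y : ∀ j, X j, (inner ℝ (Φ x) (Φ y) : ℝ) = ∏ j, k j (x j) (y j)) :
    Integrable Φ P ∧
    Integrable Φ (Measure.pi (fun j => P.map (fun x => x j))) ∧
    ‖(∫ x, Φ x ∂P) - ∫ x, Φ x ∂(Measure.pi (fun j => P.map (fun x => x j)))‖ ^ 2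
        = dHSICsqPop k P ∧
    0 ≤ dHSICsqPop k P :=
  dHSICsqPop_eq_norm_sq_mean_embedding_general X k K hbdd P H Φ hΦm hΦ

end
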